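/- Let l_1, l_2, l_3, l_4 be the vertices of a regular tetrahedron inscribed in the unit sphere S^2 ⊂ E^3 (four unit vectors with ⟨l_i, l_j⟩ = −1/3 for i ≠ j). If arccos(1/3) ≤ θ ≤ π/2, then the union of the four closed caps C[l_j, θ], j = 1, …, 4, equals the whole sphere S^2. -/

import Mathlib

open Metric Real Set RealInnerProductSpace

/-- The closed spherical cap `C[ξ, θ]` on the unit sphere `S² ⊂ E³` with center `ξ`
and radius `θ`. -/
def closedCap (ξ : EuclideanSpace ℝ (Fin 3)) (θ : ℝ) : Set (EuclideanSpace ℝ (Fin 3)) :=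
  {y ∈ sphere (0 : EuclideanSpace ℝ (Fin 3)) 1 | Real.cos θ ≤ ⟪ξ, y⟫}

/-!
For `y` on the sphere put `aⱼ = ⟪lⱼ, y⟫`. The vertices sum to zero, so `∑ aⱼ = 0`, and since
they span `E³` (the Gram matrix of any three is nonsingular) they form a tight frame,
`∑ aⱼ lⱼ = (4/3) y`, whence `∑ aⱼ² = 4/3`. If every `aⱼ` were below `1/3`, then, as `aⱼ ≥ -1`,
the nonnegative numbers `(1/3 - aⱼ)(1 + aⱼ)` would sum to `4/3 - ∑ aⱼ² = 0`, forcing every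
`aⱼ = -1`, which contradicts `∑ aⱼ = 0`.
-/

open Finset

section EquiangularFamily

variable {E ι : Type*} [NormedAddCommGroup E] [InnerProductSpace ℝ E] [Fintype ι] {v : ι → E}

theorem eq_zero_of_inner_eq_zero_of_span_range_eq_top
    (hspan : Submodule.span ℝ (range v) = ⊤) {w : E} (hw : ∀ i, ⟪v i, w⟫ = 0) : w = 0 := by
  have hw_span : w ∈ Submodule.span ℝ (range v) := hspan ▸ Submodule.mem_top
  obtain ⟨b, hb⟩ := (Submodule.mem_span_range_iff_exists_fun ℝ).mp hw_span
  rw [← inner_self_eq_zero (𝕜 := ℝ)]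
  nth_rw 1 [← hb]
  simp [sum_inner, real_inner_smul_left, hw]

variable [DecidableEq ι] {c : ℝ}

theorem inner_sum_smul_of_inner_eq_ite (hv : ∀ i j, ⟪v i, v j⟫ = if i = j then 1 else c)
    (a : ι → ℝ) (k : ι) : ⟪v k, ∑ j, a j • v j⟫ = (1 - c) * a k + c * ∑ j, a j := by
  have hsplit : ∀ j, a j * (if k = j then 1 else c) =
      (1 - c) * (if k = j then a j else 0) + c * a j := by
    intro j
    split_ifs <;> ring
  simp only [inner_sum, real_inner_smul_right, hv, hsplit, sum_add_distrib, ← mul_sum,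
    sum_ite_eq, Finset.mem_univ, if_true]

theorem linearIndependent_of_inner_eq_ite (hv : ∀ i j, ⟪v i, v j⟫ = if i = j then 1 else c)
    (hc : c ≠ 1) (hι : 1 + (Fintype.card ι - 1 : ℝ) * c ≠ 0) : LinearIndependent ℝ v := by
  rw [Fintype.linearIndependent_iff]
  intro g hg
  have hk : ∀ k, (1 - c) * g k + c * ∑ j, g j = 0 := fun k => by
    rw [← inner_sum_smul_of_inner_eq_ite hv, hg, inner_zero_right]
  have hsum : ∑ j, g j = 0 := by
    have h := sum_eq_zero (s := univ) fun k _ => hk k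
    rw [sum_add_distrib, ← mul_sum, sum_const, card_univ, nsmul_eq_mul] at h
    exact (mul_eq_zero.mp (by linear_combination h)).resolve_left hι
  intro k
  have h := hk k
  rw [hsum, mul_zero, add_zero] at h
  exact (mul_eq_zero.mp h).resolve_left (sub_ne_zero.mpr hc.symm)

theorem sum_eq_zero_of_inner_eq_ite (hv : ∀ i j, ⟪v i, v j⟫ = if i = j then 1 else c)
    (hι : 1 + (Fintype.card ι - 1 : ℝ) * c = 0) : ∑ i, v i = 0 := by
  have h : ∀ k, ⟪v k, ∑ j, v j⟫ = 0 := fun k => by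
    have h := inner_sum_smul_of_inner_eq_ite hv (fun _ => 1) k
    simp only [one_smul, sum_const, card_univ, nsmul_eq_mul, mul_one] at h
    rw [h]
    linear_combination hι
  rw [← inner_self_eq_zero (𝕜 := ℝ), sum_inner]
  simp [h]

theorem sum_inner_sq_of_inner_eq_ite (hv : ∀ i j, ⟪v i, v j⟫ = if i = j then 1 else c)
    (hspan : Submodule.span ℝ (range v) = ⊤) (hι : 1 + (Fintype.card ι - 1 : ℝ) * c = 0)
    (y : E) :
    ∑ j, ⟪v j, y⟫ ^ 2 = (1 - c) * ‖y‖ ^ 2 := by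
  have hsum : ∑ j, ⟪v j, y⟫ = 0 := by
    rw [← sum_inner, sum_eq_zero_of_inner_eq_ite hv hι, inner_zero_left]
  have hframe : ∑ j, ⟪v j, y⟫ • v j = (1 - c) • y := by
    refine sub_eq_zero.mp (eq_zero_of_inner_eq_zero_of_span_range_eq_top hspan fun k => ?_)
    rw [inner_sub_right, inner_sum_smul_of_inner_eq_ite hv, hsum, real_inner_smul_right]
    ring
  calc ∑ j, ⟪v j, y⟫ ^ 2 = ⟪∑ j, ⟪v j, y⟫ • v j, y⟫ := by
        simp only [sum_inner, real_inner_smul_left, sq]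
    _ = (1 - c) * ‖y‖ ^ 2 := by
        rw [hframe, real_inner_smul_left, real_inner_self_eq_norm_sq]

end EquiangularFamily

theorem exists_le_of_sum_eq_zero_of_le_sum_sq {ι : Type*} [Fintype ι] [Nonempty ι] {a : ι → ℝ}
    (hsum : ∑ j, a j = 0) (hlow : ∀ j, -1 ≤ a j) {t : ℝ}
    (hsq : Fintype.card ι * t ≤ ∑ j, a j ^ 2) : ∃ j, t ≤ a j := by
  by_contra! h
  have hnonneg : ∀ j ∈ Finset.univ, 0 ≤ (t - a j) * (1 + a j) := fun j _ =>
    mul_nonneg (by linarith [h j]) (by linarith [hlow j])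
  have hexpand : ∑ j, (t - a j) * (1 + a j) =
      Fintype.card ι * t + (t - 1) * ∑ j, a j - ∑ j, a j ^ 2 := by
    have h : ∀ j, (t - a j) * (1 + a j) = t + (t - 1) * a j - a j ^ 2 := fun j => by ring
    simp only [h, sum_sub_distrib, sum_add_distrib, ← mul_sum, sum_const, card_univ, nsmul_eq_mul]
  have hzero : ∀ j ∈ Finset.univ, (t - a j) * (1 + a j) = 0 :=
    (sum_eq_zero_iff_of_nonneg hnonneg).mp
      (le_antisymm (by rw [hexpand, hsum]; linarith) (sum_nonneg hnonneg))
  have hneg : ∀ j ∈ Finset.univ, a j < 0 := fun j hj => by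
    have := (mul_eq_zero.mp (hzero j hj)).resolve_left (by linarith [h j])
    linarith
  exact (sum_neg hneg univ_nonempty).ne hsum

theorem exists_one_third_le_inner_of_regular_tetrahedron (l : Fin 4 → EuclideanSpace ℝ (Fin 3))
    (hl : ∀ j k, ⟪l j, l k⟫ = if j = k then 1 else -(1 / 3)) {y : EuclideanSpace ℝ (Fin 3)}
    (hy : ‖y‖ = 1) : ∃ j, 1 / 3 ≤ ⟪l j, y⟫ := by
  have hspan : Submodule.span ℝ (range l) = ⊤ := by
    have hface : LinearIndependent ℝ (l ∘ Fin.castSucc) :=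
      linearIndependent_of_inner_eq_ite (c := -(1 / 3))
        (fun j k => by simpa using hl j.castSucc k.castSucc) (by norm_num) (by norm_num)
    exact top_unique <| (hface.span_eq_top_of_card_eq_finrank' (by simp)).ge.trans
      (Submodule.span_mono (range_comp_subset_range _ _))
  have hl_norm : ∀ j, ‖l j‖ = 1 := fun j => by
    have h := hl j j
    rwa [if_pos rfl, real_inner_self_eq_norm_sq,
      pow_eq_one_iff_of_nonneg (norm_nonneg _) two_ne_zero] at h
  refine exists_le_of_sum_eq_zero_of_le_sum_sq ?_ (fun j => neg_one_le_real_inner_of_norm_eq_one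
    (hl_norm j) hy) ?_
  · rw [← sum_inner, sum_eq_zero_of_inner_eq_ite hl (by norm_num), inner_zero_left]
  · rw [sum_inner_sq_of_inner_eq_ite hl hspan (by norm_num), hy]
    norm_num

/-- Let `l₁, …, l₄` be the vertices of a regular tetrahedron inscribed in the unit
sphere. If `arccos(1/3) ≤ θ ≤ π/2`, then the four closed caps `C[lⱼ, θ]` cover the
whole sphere. -/
theorem caps_cover_sphere
    (l : Fin 4 → EuclideanSpace ℝ (Fin 3))
    (hl : ∀ j, ‖l j‖ = 1)
    (hij : ∀ j k, j ≠ k → ⟪l j, l k⟫ = -(1 / 3))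
    (θ : ℝ) (hθ₁ : Real.arccos (1 / 3) ≤ θ) (hθ₂ : θ ≤ Real.pi / 2) :
    (⋃ j, closedCap (l j) θ) = sphere (0 : EuclideanSpace ℝ (Fin 3)) 1 := by
  refine Subset.antisymm (iUnion_subset fun j y hy => hy.1) fun y hy => ?_
  have hgram : ∀ j k, ⟪l j, l k⟫ = if j = k then 1 else -(1 / 3) := fun j k => by
    split_ifs with h
    · rw [h, real_inner_self_eq_norm_sq, hl, one_pow]
    · exact hij j k h
  have hcos : Real.cos θ ≤ 1 / 3 := by
    calc Real.cos θ ≤ Real.cos (Real.arccos (1 / 3)) :=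
          cos_le_cos_of_nonneg_of_le_pi (arccos_nonneg _) (by linarith [pi_pos]) hθ₁
      _ = 1 / 3 := cos_arccos (by norm_num) (by norm_num)
  obtain ⟨j, hj⟩ := exists_one_third_le_inner_of_regular_tetrahedron l hgram (by simpa using hy)
  exact mem_iUnion.mpr ⟨j, hy, hcos.trans hj⟩
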